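/- arXiv:1111.5561 — 2 statements merged into one kernel-verified Lean document; each statement's English description precedes it below -/
import Mathlib

section
/- Let f be a homeomorphism of the torus T² homotopic to a Dehn twist, with lift f̂ to the vertical cylinder A and covering map π : ℝ² → A. Every connected component of π⁻¹(ω(B_S⁻)) ⊂ ℝ² is unbounded (not necessarily in the vertical direction). -/
noncomputable section

open MeasureTheory

abbrev Torus := AddCircle (1 : ℝ) × AddCircle (1 : ℝ)
abbrev Cyl := AddCircle (1 : ℝ) × ℝ

/-- The covering map from the plane to the vertical cylinder. -/
def projCyl (z : ℝ × ℝ) : Cyl := ((z.1 : AddCircle (1 : ℝ)), z.2)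

/-- The covering map from the plane to the torus. -/
def projTorus (z : ℝ × ℝ) : Torus := ((z.1 : AddCircle (1 : ℝ)), (z.2 : AddCircle (1 : ℝ)))

/-- A lift to the plane of a torus homeomorphism homotopic to a Dehn twist:
a homeomorphism of the plane commuting with integer horizontal translations and
satisfying the Dehn-twist relation for vertical translations, with twist
coefficient `k > 0`. -/
structure DehnLift where
  F : (ℝ × ℝ) ≃ₜ (ℝ × ℝ)
  k : ℤ
  k_pos : 0 < k
  horiz : ∀ x y : ℝ, F (x + 1, y) = F (x, y) + (1, 0)
  vert : ∀ x y : ℝ, F (x, y + 1) = F (x, y) + ((k : ℝ), 1)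

/-- The vertical rotation set of a cylinder map:
`ρ_V(f̂) = ∩_{i≥1} closure( ∪_{n≥i} { (p₂(f̂ⁿ(ẑ)) − p₂(ẑ))/n : ẑ ∈ A } )`. -/
def rotSet (fhat : Cyl → Cyl) : Set ℝ :=
  ⋂ i : ℕ, closure (⋃ n : ℕ, ⋃ _ : i + 1 ≤ n,
    {r : ℝ | ∃ z : Cyl, r = ((fhat^[n] z).2 - z.2) / n})

/-- A subset of the cylinder is bounded iff its second-coordinate projection is
a bounded subset of `ℝ`. -/
def VBounded (S : Set Cyl) : Prop := ∃ M : ℝ, ∀ z ∈ S, |z.2| ≤ M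

/-- `B⁻ = {ẑ : f̂ⁿ(ẑ) ∈ H⁻ for all n ≥ 0}` where `H⁻ = (ℝ/ℤ)×(−∞,0]`. -/
def Bminus (fhat : Cyl → Cyl) : Set Cyl := {z | ∀ n : ℕ, (fhat^[n] z).2 ≤ 0}

/-- `B⁺ = {ẑ : f̂ⁿ(ẑ) ∈ H⁺ for all n ≥ 0}` where `H⁺ = (ℝ/ℤ)×[0,∞)`. -/
def Bplus (fhat : Cyl → Cyl) : Set Cyl := {z | ∀ n : ℕ, 0 ≤ (fhat^[n] z).2}

/-- `B_S⁻`: the union of the unbounded connected components of `B⁻`. -/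
def BS (fhat : Cyl → Cyl) : Set Cyl :=
  {z | z ∈ Bminus fhat ∧ ¬ VBounded (connectedComponentIn (Bminus fhat) z)}

/-- `B_N⁺`: the union of the unbounded connected components of `B⁺`. -/
def BN (fhat : Cyl → Cyl) : Set Cyl :=
  {z | z ∈ Bplus fhat ∧ ¬ VBounded (connectedComponentIn (Bplus fhat) z)}

/-- The ω-limit set `ω(S) = ∩_{n≥0} closure(∪_{i≥n} f̂ⁱ(S))`. -/
def omegaSet (fhat : Cyl → Cyl) (S : Set Cyl) : Set Cyl :=
  ⋂ n : ℕ, closure (⋃ i : ℕ, ⋃ _ : n ≤ i, fhat^[i] '' S)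

/-! If a component of `π⁻¹(ω(B_S⁻))` were bounded, Šura-Bura's lemma would give a bounded open
set `U` around it whose frontier misses `π⁻¹(ω(B_S⁻))`; by compactness the frontier then
already misses the closure of `π⁻¹(⋃_{i ≥ N} f̂ⁱ(B_S⁻))` for some `N`. That set has a point in
`U`, and all of its components are unbounded: the lift of a component of `B_S⁻` is unbounded
(again by Šura-Bura, since a bounded one would project into a compact set), and the lift `F`
maps such lifts homeomorphically. So such a component crosses `∂U`, a contradiction. -/

open Set Bornology

section SuraBura

variable {X : Type*} [TopologicalSpace X]

theorem exists_isClopen_mem_subset_of_connectedComponent_subset [CompactSpace X] [T2Space X]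
    {x : X} {U : Set X} (hU : IsOpen U) (hxU : connectedComponent x ⊆ U) :
    ∃ V, IsClopen V ∧ x ∈ V ∧ V ⊆ U := by
  have hempty : Uᶜ ∩ ⋂ s : {s : Set X // IsClopen s ∧ x ∈ s}, (s : Set X) = ∅ := by
    rw [← connectedComponent_eq_iInter_isClopen, ← disjoint_iff_inter_eq_empty]
    exact disjoint_compl_left_iff_subset.mpr hxU
  obtain ⟨t, ht⟩ := hU.isClosed_compl.isCompact.elim_finite_subfamily_closed _
    (fun s => s.2.1.isClosed) hempty
  refine ⟨⋂ s ∈ t, (s : Set X), isClopen_biInter_finset fun s _ => s.2.1,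
    mem_iInter₂.2 fun s _ => s.2.2, ?_⟩
  rwa [← disjoint_compl_left_iff_subset, disjoint_iff_inter_eq_empty]

variable [LocallyCompactSpace X] [T2Space X] {A : Set X} {x : X}

theorem exists_isCompact_mem_subset_isClosed_diff (hA : IsClosed A) (hx : x ∈ A)
    (hC : IsCompact (closure (connectedComponentIn A x))) :
    ∃ K, IsCompact K ∧ x ∈ K ∧ K ⊆ A ∧ IsClosed (A \ K) := by
  obtain ⟨O, hO, hCO, -, hOc⟩ :=
    exists_open_between_and_isCompact_closure hC isOpen_univ (subset_univ _)
  set Y := A ∩ closure O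
  have hxY : x ∈ Y := ⟨hx, subset_closure (hCO (subset_closure (mem_connectedComponentIn hx)))⟩
  have : CompactSpace Y := isCompact_iff_compactSpace.mp (hOc.inter_left hA)
  have hcomp : connectedComponent (⟨x, hxY⟩ : Y) ⊆ Subtype.val ⁻¹' O := by
    rw [← image_subset_iff, ← connectedComponentIn_eq_image hxY]
    exact (connectedComponentIn_mono x inter_subset_left).trans (subset_closure.trans hCO)
  obtain ⟨V, hV, hxV, hVO⟩ := exists_isClopen_mem_subset_of_connectedComponent_subset
    (hO.preimage continuous_subtype_val) hcomp
  obtain ⟨W, hW, rfl⟩ := isOpen_induced_iff.mp hV.isOpen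
  refine ⟨Subtype.val '' (Subtype.val ⁻¹' W), hV.isClosed.isCompact.image continuous_subtype_val,
    ⟨_, hxV, rfl⟩, by rintro _ ⟨y, -, rfl⟩; exact y.2.1, ?_⟩
  convert hA.sdiff (hO.inter hW) using 1
  ext a
  refine ⟨fun ⟨haA, haK⟩ => ⟨haA, fun ⟨haO, haW⟩ =>
    haK ⟨⟨a, haA, subset_closure haO⟩, haW, rfl⟩⟩, fun ⟨haA, haOW⟩ => ⟨haA, ?_⟩⟩
  rintro ⟨y, hyW, rfl⟩
  exact haOW ⟨hVO hyW, hyW⟩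

/-- Šura-Bura's lemma. -/
theorem exists_isOpen_isCompact_closure_disjoint_frontier (hA : IsClosed A) (hx : x ∈ A)
    (hC : IsCompact (closure (connectedComponentIn A x))) :
    ∃ U, IsOpen U ∧ IsCompact (closure U) ∧ x ∈ U ∧ Disjoint A (frontier U) := by
  obtain ⟨K, hK, hxK, hKA, hAK⟩ := exists_isCompact_mem_subset_isClosed_diff hA hx hC
  obtain ⟨U, hU, hKU, hUAK, hUc⟩ := exists_open_between_and_isCompact_closure hK
    hAK.isOpen_compl fun k hk hk' => hk'.2 hk
  refine ⟨U, hU, hUc, hKU hxK, disjoint_left.mpr fun a haA haU => ?_⟩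
  rw [hU.frontier_eq] at haU
  exact haU.2 (hKU (by_contra fun haK => hUAK haU.1 ⟨haA, haK⟩))

end SuraBura

def HasUnboundedComponents {X : Type*} [TopologicalSpace X] [Bornology X] (S : Set X) : Prop :=
  ∀ x ∈ S, ¬ IsBounded (connectedComponentIn S x)

namespace HasUnboundedComponents

theorem iUnion {X : Type*} {ι : Sort*} [TopologicalSpace X] [Bornology X] {S : ι → Set X}
    (h : ∀ i, HasUnboundedComponents (S i)) : HasUnboundedComponents (⋃ i, S i) := by
  intro x hx hb
  obtain ⟨i, hi⟩ := mem_iUnion.mp hx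
  exact h i x hi (hb.subset (connectedComponentIn_mono x (subset_iUnion S i)))

theorem image {X Y : Type*} [PseudoMetricSpace X] [PseudoMetricSpace Y] [ProperSpace Y]
    {S : Set X} (hS : HasUnboundedComponents S) (h : X ≃ₜ Y) :
    HasUnboundedComponents (h '' S) := by
  rintro _ ⟨x, hx, rfl⟩ hb
  rw [← h.image_connectedComponentIn hx] at hb
  refine hS x hx ((hb.isCompact_closure.image h.symm.continuous).isBounded.subset ?_)
  exact fun c hc => ⟨h c, subset_closure ⟨c, hc, rfl⟩, h.symm_apply_apply c⟩

theorem iInter_closure {X : Type*} [MetricSpace X] [ProperSpace X] {S : ℕ → Set X}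
    (hS : Antitone S) (h : ∀ n, HasUnboundedComponents (S n)) :
    HasUnboundedComponents (⋂ n, closure (S n)) := by
  intro z hz hb
  obtain ⟨U, hU, hUc, hzU, hdisj⟩ := exists_isOpen_isCompact_closure_disjoint_frontier
    (isClosed_iInter fun n => isClosed_closure) hz hb.isCompact_closure
  obtain ⟨N, hN⟩ : ∃ N, frontier U ∩ closure (S N) = ∅ :=
    (hUc.of_isClosed_subset isClosed_frontier frontier_subset_closure
      ).elim_directed_family_closed _ (fun n => isClosed_closure)
      (disjoint_iff_inter_eq_empty.mp hdisj.symm)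
      (Antitone.directed_ge fun _ _ hmn => closure_mono (hS hmn))
  obtain ⟨w, hwU, hwS⟩ := mem_closure_iff.mp (mem_iInter.mp hz N) U hU hzU
  set T := connectedComponentIn (S N) w
  have hTU : ¬ T ⊆ U := fun hTU => h N w hwS (hUc.isBounded.subset (hTU.trans subset_closure))
  -- A preconnected set meeting the open set `U` without lying in it meets its frontier.
  obtain ⟨a, ⟨haU, haT⟩, haU'⟩ := not_subset.mp fun hsub =>
    hTU (isPreconnected_connectedComponentIn.subset_of_closure_inter_subset hU
      ⟨w, mem_connectedComponentIn hwS, hwU⟩ hsub)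
  have haS : a ∈ closure (S N) := subset_closure (connectedComponentIn_subset _ _ haT)
  exact (eq_empty_iff_forall_notMem.mp hN) a ⟨by rw [hU.frontier_eq]; exact ⟨haU, haU'⟩, haS⟩

end HasUnboundedComponents

theorem IsOpenMap.exists_isCompact_superset_connectedComponentIn {X Y : Type*} [MetricSpace X]
    [ProperSpace X] [TopologicalSpace Y] [T2Space Y] {p : X → Y} (hpo : IsOpenMap p)
    (hp : Continuous p) {B : Set Y} (hB : IsClosed (p ⁻¹' B)) {q : X} (hq : q ∈ p ⁻¹' B)
    (hb : IsBounded (connectedComponentIn (p ⁻¹' B) q)) :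
    ∃ K, IsCompact K ∧ connectedComponentIn B (p q) ⊆ K := by
  obtain ⟨U, hU, hUc, hqU, hdisj⟩ :=
    exists_isOpen_isCompact_closure_disjoint_frontier hB hq hb.isCompact_closure
  have hK : IsCompact (p '' closure U) := hUc.image hp
  refine ⟨p '' closure U, hK, Subset.trans ?_ (image_mono subset_closure)⟩
  refine isPreconnected_connectedComponentIn.subset_of_closure_inter_subset (hpo U hU)
    ⟨p q, mem_connectedComponentIn hq, q, hqU, rfl⟩ ?_
  rintro _ ⟨hcl, hC⟩
  obtain ⟨a, ha, rfl⟩ := closure_minimal (image_mono subset_closure) hK.isClosed hcl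
  refine ⟨a, by_contra fun haU => disjoint_left.mp hdisj
    (show p a ∈ B from connectedComponentIn_subset _ _ hC) ?_, rfl⟩
  rw [hU.frontier_eq]
  exact ⟨ha, haU⟩

theorem projCyl_eq_projCyl_iff {w v : ℝ × ℝ} :
    projCyl w = projCyl v ↔ ∃ m : ℤ, w = v + ((m : ℝ), 0) := by
  simp only [projCyl, Prod.ext_iff, QuotientAddGroup.eq_iff_sub_mem,
    AddSubgroup.mem_zmultiples_iff, zsmul_eq_mul, mul_one, Prod.fst_add, Prod.snd_add, add_zero]
  constructor
  · rintro ⟨⟨m, hm⟩, h2⟩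
    exact ⟨m, by linarith, h2⟩
  · rintro ⟨m, h1, h2⟩
    exact ⟨⟨m, by linarith⟩, h2⟩

theorem continuous_projCyl : Continuous projCyl :=
  ((AddCircle.continuous_mk' 1).comp continuous_fst).prodMk continuous_snd

theorem isOpenMap_projCyl : IsOpenMap projCyl :=
  QuotientAddGroup.isOpenMap_coe.prodMap IsOpenMap.id

theorem projCyl_surjective : Function.Surjective projCyl := by
  rintro ⟨a, b⟩
  obtain ⟨x, rfl⟩ := QuotientAddGroup.mk_surjective a
  exact ⟨(x, b), rfl⟩

theorem isClosed_Bminus {fhat : Cyl → Cyl} (hf : Continuous fhat) :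
    IsClosed (Bminus fhat) := by
  simp only [Bminus, ofPred_forall]
  exact isClosed_iInter fun n => isClosed_le (continuous_snd.comp (hf.iterate n)) continuous_const

theorem vBounded_of_subset_isCompact {S K : Set Cyl} (hK : IsCompact K) (hSK : S ⊆ K) :
    VBounded S := by
  obtain ⟨M, hM⟩ := hK.exists_bound_of_continuousOn continuous_snd.continuousOn
  exact ⟨M, fun z hz => hM z (hSK hz)⟩

theorem preimage_projCyl_omegaSet (fhat : Cyl → Cyl) (S : Set Cyl) :
    projCyl ⁻¹' omegaSet fhat S =
      ⋂ n : ℕ, closure (projCyl ⁻¹' ⋃ i : ℕ, ⋃ _ : n ≤ i, fhat^[i] '' S) := by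
  simp only [omegaSet, preimage_iInter,
    isOpenMap_projCyl.preimage_closure_eq_closure_preimage continuous_projCyl]

theorem DehnLift.map_add_intCast (L : DehnLift) (m : ℤ) (v : ℝ × ℝ) :
    L.F (v + ((m : ℝ), 0)) = L.F v + ((m : ℝ), 0) := by
  have h := AddConstMapClass.map_add_zsmul
    (⟨L.F, fun ⟨x, y⟩ => by simpa using L.horiz x y⟩ :
      AddConstMap (ℝ × ℝ) (ℝ × ℝ) (1, 0) (1, 0)) v m
  simpa [Prod.smul_mk] using h

section Semiconj

variable (L : DehnLift) {fhat : Cyl → Cyl}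

theorem continuous_of_semiconj
    (hfhat : ∀ z : ℝ × ℝ, projCyl (L.F z) = fhat (projCyl z)) :
    Continuous fhat := by
  rw [(isOpenMap_projCyl.isQuotientMap continuous_projCyl projCyl_surjective).continuous_iff]
  exact (funext hfhat : projCyl ∘ L.F = fhat ∘ projCyl) ▸ continuous_projCyl.comp L.F.continuous

theorem preimage_projCyl_image
    (hfhat : ∀ z : ℝ × ℝ, projCyl (L.F z) = fhat (projCyl z))
    (Y : Set Cyl) :
    projCyl ⁻¹' (fhat '' Y) = L.F '' (projCyl ⁻¹' Y) := by
  ext w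
  constructor
  · rintro ⟨s, hs, hw⟩
    obtain ⟨v, rfl⟩ := projCyl_surjective s
    obtain ⟨m, rfl⟩ := projCyl_eq_projCyl_iff.mp (hw.symm.trans (hfhat v).symm)
    refine ⟨v + ((m : ℝ), 0), ?_, L.map_add_intCast m v⟩
    rwa [mem_preimage, projCyl_eq_projCyl_iff.mpr ⟨m, rfl⟩]
  · rintro ⟨v, hv, rfl⟩
    exact ⟨_, hv, (hfhat v).symm⟩

theorem hasUnboundedComponents_preimage_projCyl_BS
    (hfhat : ∀ z : ℝ × ℝ, projCyl (L.F z) = fhat (projCyl z)) :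
    HasUnboundedComponents (projCyl ⁻¹' BS fhat) := by
  intro q hq
  have hqB : q ∈ projCyl ⁻¹' Bminus fhat := hq.1
  have hB : IsClosed (projCyl ⁻¹' Bminus fhat) :=
    (isClosed_Bminus (continuous_of_semiconj L hfhat)).preimage continuous_projCyl
  set C := connectedComponentIn (projCyl ⁻¹' Bminus fhat) q
  have hproj : MapsTo projCyl C (connectedComponentIn (Bminus fhat) (projCyl q)) := by
    simpa only [image_preimage_eq _ projCyl_surjective] using
      continuous_projCyl.continuousOn.mapsTo_connectedComponentIn hqB
  have hCBS : C ⊆ projCyl ⁻¹' BS fhat := fun c hc =>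
    ⟨connectedComponentIn_subset (Bminus fhat) _ (hproj hc),
      connectedComponentIn_eq (hproj hc) ▸ hq.2⟩
  have hC : ¬ IsBounded C := fun hb => by
    obtain ⟨K, hK, hsub⟩ := isOpenMap_projCyl.exists_isCompact_superset_connectedComponentIn
      continuous_projCyl hB hqB hb
    exact hq.2 (vBounded_of_subset_isCompact hK hsub)
  exact fun hb => hC (hb.subset
    (isPreconnected_connectedComponentIn.subset_connectedComponentIn
      (mem_connectedComponentIn hqB) hCBS))

theorem hasUnboundedComponents_preimage_projCyl_iterate_image
    (hfhat : ∀ z : ℝ × ℝ, projCyl (L.F z) = fhat (projCyl z)) {Y : Set Cyl}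
    (hY : HasUnboundedComponents (projCyl ⁻¹' Y)) (i : ℕ) :
    HasUnboundedComponents (projCyl ⁻¹' (fhat^[i] '' Y)) := by
  induction i with
  | zero => simpa using hY
  | succ i ih =>
    rw [Function.iterate_succ', image_comp, preimage_projCyl_image L hfhat]
    exact ih.image L.F

end Semiconj

/-- Every connected component of `π⁻¹(ω(B_S⁻)) ⊆ ℝ²` is
unbounded. -/
theorem components_of_preimage_omega_BS_unbounded
    (L : DehnLift) (fhat : Cyl → Cyl)
    (hfhat : ∀ z : ℝ × ℝ, projCyl (L.F z) = fhat (projCyl z)) :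
    ∀ z ∈ projCyl ⁻¹' omegaSet fhat (BS fhat),
      ¬ Bornology.IsBounded
        (connectedComponentIn (projCyl ⁻¹' omegaSet fhat (BS fhat)) z) := by
  show HasUnboundedComponents _
  rw [preimage_projCyl_omegaSet]
  refine HasUnboundedComponents.iInter_closure (fun m n hmn => preimage_mono ?_) fun n => ?_
  · exact iUnion₂_mono' fun i hi => ⟨i, hmn.trans hi, subset_rfl⟩
  · simp only [preimage_iUnion]
    exact .iUnion fun i => .iUnion fun _ => hasUnboundedComponents_preimage_projCyl_iterate_image
      L hfhat (hasUnboundedComponents_preimage_projCyl_BS L hfhat) i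
end
end

section
/- Let F be a closed subset of the vertical cylinder A = (ℝ/ℤ)×ℝ. Then the union of all unbounded connected components of F is a closed subset of A. -/
noncomputable section

open MeasureTheory

/-!
A bounded component `C` of the closed set `F` is compact, so it lies in a compact piece `F ∩ K`
of `F`. In a compact Hausdorff space components are quasi-components, hence `C` has a
neighbourhood in `F` which is clopen in `F ∩ K` and stays away from the frontier of `K`; such a
neighbourhood is clopen in `F` itself. Every point of `F` close to `C` lies in it, and so does
its whole component, which is therefore bounded.
-/

section ComponentsOfClosedSets

open Set

variable {X : Type*} [TopologicalSpace X]

theorem IsClosed.isClosed_connectedComponentIn {F : Set X} (hF : IsClosed F) (x : X) :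
    IsClosed (connectedComponentIn F x) := by
  by_cases hx : x ∈ F
  · exact closure_subset_iff_isClosed.mp <|
      isPreconnected_connectedComponentIn.closure.subset_connectedComponentIn
        (subset_closure (mem_connectedComponentIn hx))
        (closure_minimal (connectedComponentIn_subset F x) hF)
  · exact connectedComponentIn_eq_empty hx ▸ isClosed_empty

theorem exists_isClopen_mem_disjoint_of_disjoint_connectedComponent [T2Space X] [CompactSpace X]
    {x : X} {D : Set X} (hD : IsClosed D) (hDx : Disjoint D (connectedComponent x)) :
    ∃ U, IsClopen U ∧ x ∈ U ∧ Disjoint D U := by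
  rw [connectedComponent_eq_iInter_isClopen, disjoint_iff_inter_eq_empty] at hDx
  obtain ⟨t, ht⟩ := hD.isCompact.elim_finite_subfamily_closed _ (fun U => U.2.1.isClosed) hDx
  exact ⟨⋂ U ∈ t, U.1, isClopen_biInter_finset fun U _ => U.2.1,
    mem_iInter₂.mpr fun U _ => U.2.2, disjoint_iff_inter_eq_empty.mpr ht⟩

theorem connectedComponentIn_subset_inter_of_isClosed_inter {F W : Set X} (hW : IsOpen W)
    (hFW : IsClosed (F ∩ W)) {w : X} (hw : w ∈ W) :
    connectedComponentIn F w ⊆ F ∩ W := by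
  by_cases hwF : w ∈ F
  · have hcover : connectedComponentIn F w ⊆ (F ∩ W) ∪ Wᶜ := fun p hp => by
      by_cases hpW : p ∈ W
      · exact Or.inl ⟨connectedComponentIn_subset F w hp, hpW⟩
      · exact Or.inr hpW
    have hdisj : connectedComponentIn F w ∩ ((F ∩ W) ∩ Wᶜ) = ∅ := by
      rw [inter_assoc F, inter_compl_self, inter_empty, inter_empty]
    refine (isPreconnected_iff_subset_of_disjoint_closed.mp isPreconnected_connectedComponentIn
      _ _ hFW hW.isClosed_compl hcover hdisj).resolve_right fun h => ?_
    exact h (mem_connectedComponentIn hwF) hw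
  · exact connectedComponentIn_eq_empty hwF ▸ empty_subset _

theorem exists_isOpen_mem_isCompact_inter_of_isCompact_connectedComponentIn [T2Space X]
    [WeaklyLocallyCompactSpace X] {F : Set X} (hF : IsClosed F) {x : X} (hx : x ∈ F)
    (hC : IsCompact (connectedComponentIn F x)) :
    ∃ W, IsOpen W ∧ x ∈ W ∧ IsCompact (F ∩ W) := by
  obtain ⟨V, hV, hCV, hVc⟩ := exists_isOpen_superset_and_isCompact_closure hC
  have hxV : x ∈ V := hCV (mem_connectedComponentIn hx)
  set K := F ∩ closure V
  have : CompactSpace K := isCompact_iff_compactSpace.mp (hVc.inter_left hF)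
  have hxK : x ∈ K := ⟨hx, subset_closure hxV⟩
  have hcomp : ∀ p ∈ connectedComponent (⟨x, hxK⟩ : K), (p : X) ∈ V := fun p hp =>
    hCV <| connectedComponentIn_mono x inter_subset_left <|
      connectedComponentIn_eq_image hxK ▸ mem_image_of_mem _ hp
  obtain ⟨U, hU, hxU, hUV⟩ := exists_isClopen_mem_disjoint_of_disjoint_connectedComponent
    (hV.isClosed_compl.preimage continuous_subtype_val)
    (disjoint_left.mpr fun p hp hpc => hp (hcomp p hpc))
  obtain ⟨O, hO, rfl⟩ := isOpen_induced_iff.mp hU.isOpen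
  have hFOV : F ∩ (O ∩ V) = Subtype.val '' (Subtype.val ⁻¹' O : Set K) := by
    refine subset_antisymm (fun p ⟨hpF, hpO, hpV⟩ => ⟨⟨p, hpF, subset_closure hpV⟩, hpO, rfl⟩) ?_
    rintro _ ⟨q, hqO, rfl⟩
    exact ⟨q.2.1, hqO, not_not.mp fun hqV => disjoint_left.mp hUV hqV hqO⟩
  refine ⟨O ∩ V, hO.inter hV, ⟨hxU, hxV⟩, ?_⟩
  rw [hFOV]
  exact hU.isClosed.isCompact.image continuous_subtype_val

theorem isClosed_setOf_not_isCompact_connectedComponentIn [T2Space X] [WeaklyLocallyCompactSpace X]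
    {F : Set X} (hF : IsClosed F) :
    IsClosed {z | z ∈ F ∧ ¬IsCompact (connectedComponentIn F z)} := by
  refine isClosed_of_closure_subset fun z hz => ?_
  have hzF : z ∈ F := closure_minimal (fun _ h => h.1) hF hz
  refine ⟨hzF, fun hC => ?_⟩
  obtain ⟨W, hW, hzW, hFW⟩ :=
    exists_isOpen_mem_isCompact_inter_of_isCompact_connectedComponentIn hF hzF hC
  obtain ⟨w, hwW, -, hw⟩ := mem_closure_iff.mp hz W hW hzW
  exact hw <| hFW.of_isClosed_subset (hF.isClosed_connectedComponentIn w)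
    (connectedComponentIn_subset_inter_of_isClosed_inter hW hFW.isClosed hwW)

end ComponentsOfClosedSets

theorem vBounded_iff_isCompact {S : Set Cyl} (hS : IsClosed S) : VBounded S ↔ IsCompact S := by
  constructor
  · rintro ⟨M, hM⟩
    exact (isCompact_univ.prod (isCompact_Icc (a := -M) (b := M))).of_isClosed_subset hS
      fun z hz => ⟨Set.mem_univ _, abs_le.mp (hM z hz)⟩
  · intro hK
    exact hK.exists_bound_of_continuousOn continuous_snd.continuousOn

/-- For a closed subset `F` of the vertical cylinder, the union
of all unbounded connected components of `F` is closed. -/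
theorem union_of_unbounded_components_isClosed
    (F : Set Cyl) (hF : IsClosed F) :
    IsClosed {z | z ∈ F ∧ ¬ VBounded (connectedComponentIn F z)} := by
  simpa only [vBounded_iff_isCompact (hF.isClosed_connectedComponentIn _)] using
    isClosed_setOf_not_isCompact_connectedComponentIn hF
end
end
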